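/- arXiv:2407.11248 — 2 statements merged into one kernel-verified Lean document; each statement's English description precedes it below -/
import Mathlib

section
/- Let f : ℝ^n → ℝ^n be C^1, let S ⊆ ℝ^n be a linear subspace of dimension n - d with orthonormal basis u_1, ..., u_d of its orthogonal complement S^⊥. Suppose at a point x* the Jacobian J = Df(x*) satisfies ker(J) ∩ S = {0} and the rows f_{d+1}, ..., f_n of f span the row space of f in the sense that each row of J indexed by 1,...,d is a fixed linear combination of the rows indexed by d+1,...,n. Define the reduced Jacobian matrix J̃ as the n×n matrix whose first d rows are u_1^T, ..., u_d^T and whose last n-d rows are the gradients ∇f_{d+1}(x*), ..., ∇f_n(x*). Then det(J̃) ≠ 0. -/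
/-!
A vector `v` killed by the reduced Jacobian is orthogonal to every `u i`, hence lies in
`(Sᗮ)ᗮ = S`, and is killed by the last `m` rows of `J`. Since the first `d` rows of `J` are
combinations of the last `m`, `J v = 0`, so `v ∈ ker J ∩ S = {0}`.
-/

open scoped InnerProductSpace
open Matrix

theorem Submodule.mem_orthogonal_span_range {𝕜 E ι : Type*} [RCLike 𝕜] [NormedAddCommGroup E]
    [InnerProductSpace 𝕜 E] {u : ι → E} {w : E} (h : ∀ i, ⟪u i, w⟫_𝕜 = 0) :
    w ∈ (Submodule.span 𝕜 (Set.range u))ᗮ := by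
  rw [← Submodule.span_singleton_le_iff_mem, ← Submodule.isOrtho_iff_le, Submodule.isOrtho_comm,
    Submodule.isOrtho_span]
  rintro _ ⟨i, rfl⟩ _ rfl
  exact h i

theorem Matrix.mulVec_eq_zero_of_rows_eq_sum {R n : Type*} [CommSemiring R] [Fintype n]
    {d m : ℕ} {J : Matrix (Fin (d + m)) n R}
    (hrows : ∀ i : Fin d, ∃ a : Fin m → R,
      ∀ j, J (Fin.castAdd m i) j = ∑ l : Fin m, a l * J (Fin.natAdd d l) j)
    {v : n → R} (hv : J.submatrix (Fin.natAdd d) id *ᵥ v = 0) : J *ᵥ v = 0 := by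
  have hbot (l : Fin m) : J (Fin.natAdd d l) ⬝ᵥ v = 0 := congrFun hv l
  funext i
  induction i using Fin.addCases with
  | left i =>
    obtain ⟨a, ha⟩ := hrows i
    have hrow : J (Fin.castAdd m i) = ∑ l, a l • J (Fin.natAdd d l) := by
      ext j
      simp [ha]
    simp only [mulVec, hrow, sum_dotProduct, smul_dotProduct, hbot, smul_zero,
      Finset.sum_const_zero, Pi.zero_apply]
  | right l => exact hbot l

theorem Matrix.mulVec_eq_zero_of_addCases_mulVec_eq_zero {R n : Type*}
    [NonUnitalNonAssocSemiring R] [Fintype n] {d m : ℕ}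
    {A : Matrix (Fin d) n R} {B : Matrix (Fin m) n R} {v : n → R}
    (h : Matrix.of (fun i j => Fin.addCases (motive := fun _ => R) (fun i₀ => A i₀ j)
      (fun i₁ => B i₁ j) i) *ᵥ v = 0) :
    A *ᵥ v = 0 ∧ B *ᵥ v = 0 :=
  ⟨funext fun i => by simpa [mulVec] using congrFun h (Fin.castAdd m i),
    funext fun l => by simpa [mulVec] using congrFun h (Fin.natAdd d l)⟩

theorem stmt_2_general (d m : ℕ)
    (S : Submodule ℝ (EuclideanSpace ℝ (Fin (d + m))))
    (u : Fin d → EuclideanSpace ℝ (Fin (d + m)))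
    (hspan : Submodule.span ℝ (Set.range u) = Sᗮ)
    (J : Matrix (Fin (d + m)) (Fin (d + m)) ℝ)
    -- each of the first d rows of J is a linear combination of the last m rows
    (hrows : ∀ i : Fin d, ∃ a : Fin m → ℝ,
      ∀ j, J (Fin.castAdd m i) j = ∑ l : Fin m, a l * J (Fin.natAdd d l) j)
    -- ker(J) ∩ S = {0}
    (hker : ∀ v : EuclideanSpace ℝ (Fin (d + m)), v ∈ S →
      J.mulVec (fun j => v j) = 0 → v = 0) :
    (Matrix.of fun i j =>
      Fin.addCases (motive := fun _ => ℝ) (fun i₀ => u i₀ j)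
        (fun i₁ => J (Fin.natAdd d i₁) j) i :
      Matrix (Fin (d + m)) (Fin (d + m)) ℝ).det ≠ 0 := by
  rw [Ne, ← exists_mulVec_eq_zero_iff]
  rintro ⟨v, hv0, hv⟩
  obtain ⟨hperp, hbot⟩ := mulVec_eq_zero_of_addCases_mulVec_eq_zero (A := of fun i j => u i j)
    (B := J.submatrix (Fin.natAdd d) id) hv
  have hvS : WithLp.toLp 2 v ∈ S := by
    rw [← S.orthogonal_orthogonal, ← hspan]
    refine Submodule.mem_orthogonal_span_range fun i => ?_
    simpa [EuclideanSpace.inner_eq_star_dotProduct, mulVec, dotProduct_comm] using congrFun hperp i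
  exact hv0 (congrArg WithLp.ofLp (hker _ hvS (mulVec_eq_zero_of_rows_eq_sum hrows hbot)))

/-- Lemma 4.3: the reduced Jacobian matrix is nonsingular. -/
theorem stmt_2 (d m : ℕ)
    (f : EuclideanSpace ℝ (Fin (d + m)) → EuclideanSpace ℝ (Fin (d + m)))
    (hf : ContDiff ℝ 1 f)
    (x : EuclideanSpace ℝ (Fin (d + m)))
    (S : Submodule ℝ (EuclideanSpace ℝ (Fin (d + m))))
    (hS : Module.finrank ℝ S = m)
    (u : Fin d → EuclideanSpace ℝ (Fin (d + m)))
    (hu : Orthonormal ℝ u)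
    (hspan : Submodule.span ℝ (Set.range u) = Sᗮ)
    (J : Matrix (Fin (d + m)) (Fin (d + m)) ℝ)
    (hJ : ∀ i j, J i j = fderiv ℝ f x (EuclideanSpace.single j 1) i)
    -- each of the first d rows of J is a linear combination of the last m rows
    (hrows : ∀ i : Fin d, ∃ a : Fin m → ℝ,
      ∀ j, J (Fin.castAdd m i) j = ∑ l : Fin m, a l * J (Fin.natAdd d l) j)
    -- ker(J) ∩ S = {0}
    (hker : ∀ v : EuclideanSpace ℝ (Fin (d + m)), v ∈ S →
      J.mulVec (fun j => v j) = 0 → v = 0) :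
    (Matrix.of fun i j =>
      Fin.addCases (motive := fun _ => ℝ) (fun i₀ => u i₀ j)
        (fun i₁ => J (Fin.natAdd d i₁) j) i :
      Matrix (Fin (d + m)) (Fin (d + m)) ℝ).det ≠ 0 :=
  stmt_2_general d m S u hspan J hrows hker
end

section
/- Let k₁, ..., k_q > 0 and x* ∈ ℝ_{>0}^n, and let y₁, ..., y_q ∈ ℤ_{≥0}^n be the vertices of a cycle y₁ → y₂ → ... → y_q → y₁ satisfying the complex-balanced condition k₁(x*)^{y₁} = k₂(x*)^{y₂} = ... = k_q(x*)^{y_q}. Define f̃₁(x) = ∑_{i=1}^q k_i x^{y_i} Δ_i where Δ_i = y_{i+1,1} - y_{i,1} (cyclically). Then f̃₁(x*) = 0 and ∂f̃₁/∂x₁(x*) = (k₁(x*)^{y₁}/x₁*) · ∑_{i=1}^q Δ_i y_{i,1} ≤ 0, with equality if and only if y_{1,1} = y_{2,1} = ... = y_{q,1}. -/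
/-!
At the complex-balanced equilibrium every term `kᵢ (x*)^{yᵢ}` equals the same constant `c > 0`,
so `f̃₁(x*) = c ∑ Δᵢ`, which vanishes because the `Δᵢ` are the increments of `y_{·,1}` around a
cycle. Differentiating `x^{yᵢ}` in `x₁` multiplies it by `y_{i,1} / x₁`, so
`∂₁ f̃₁(x*) = (c / x₁*) ∑ Δᵢ y_{i,1}`, and summing `2 Δᵢ y_{i,1} = -Δᵢ² + (y_{i+1,1}² - y_{i,1}²)`
around the cycle gives `2 ∑ Δᵢ y_{i,1} = -∑ Δᵢ²`, which is `≤ 0` and vanishes only when all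
`Δᵢ = 0`, i.e. when the first coordinate is constant along the cycle.
-/

open Finset

section CyclicSum

variable {ι : Type*} [Fintype ι] (σ : Equiv.Perm ι) (a : ι → ℝ)

theorem sum_perm_sub_eq_zero : ∑ i, (a (σ i) - a i) = 0 := by
  rw [sum_sub_distrib, Equiv.sum_comp σ a, sub_self]

theorem two_mul_sum_perm_sub_mul_self :
    2 * ∑ i, (a (σ i) - a i) * a i = -∑ i, (a (σ i) - a i) ^ 2 := by
  have hsq : ∑ i, (a (σ i) ^ 2 - a i ^ 2) = 0 := sum_perm_sub_eq_zero σ (a · ^ 2)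
  rw [mul_sum, eq_neg_iff_add_eq_zero, ← sum_add_distrib, ← hsq]
  exact sum_congr rfl fun i _ => by ring

theorem sum_perm_sub_mul_self_nonpos : ∑ i, (a (σ i) - a i) * a i ≤ 0 := by
  have h := two_mul_sum_perm_sub_mul_self σ a
  have hsq : 0 ≤ ∑ i, (a (σ i) - a i) ^ 2 := sum_nonneg fun i _ => sq_nonneg _
  linarith

theorem sum_perm_sub_mul_self_eq_zero_iff :
    ∑ i, (a (σ i) - a i) * a i = 0 ↔ ∀ i, a (σ i) = a i := by
  have h := two_mul_sum_perm_sub_mul_self σ a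
  have hsq : ∑ i, (a (σ i) - a i) ^ 2 = 0 ↔ ∀ i, a (σ i) = a i := by
    simp [sum_eq_zero_iff_of_nonneg fun i _ => sq_nonneg (a (σ i) - a i), sub_eq_zero]
  rw [← hsq]
  constructor <;> intro h' <;> linarith

end CyclicSum

theorem Fin.eq_of_forall_add_one_eq {α : Type*} {q : ℕ} {a : Fin (q + 1) → α}
    (h : ∀ i, a (i + 1) = a i) (i j : Fin (q + 1)) : a i = a j := by
  have h0 : ∀ i, a i = a 0 := fun i => by
    induction i using Fin.induction with
    | zero => rfl
    | succ i ih => rw [← Fin.coeSucc_eq_succ, h, ih]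
  rw [h0 i, h0 j]

theorem hasFDerivAt_monomial {ι : Type*} [Fintype ι] [DecidableEq ι] (y : ι → ℕ) (x : ι → ℝ) :
    HasFDerivAt (fun x : ι → ℝ => ∏ l, x l ^ y l)
      (∑ l, (∏ m ∈ univ.erase l, x m ^ y m) •
        ((y l * x l ^ (y l - 1) : ℝ) • ContinuousLinearMap.proj (R := ℝ) (φ := fun _ => ℝ) l)) x :=
  HasFDerivAt.finsetProd fun l _ =>
    (hasDerivAt_pow (y l) (x l)).comp_hasFDerivAt x (hasFDerivAt_apply l x)

theorem fderiv_monomial_apply_single {ι : Type*} [Fintype ι] [DecidableEq ι] (y : ι → ℕ)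
    {x : ι → ℝ} {j : ι} (hx : x j ≠ 0) :
    fderiv ℝ (fun x : ι → ℝ => ∏ l, x l ^ y l) x (Pi.single j 1) =
      y j / x j * ∏ l, x l ^ y l := by
  rw [(hasFDerivAt_monomial y x).fderiv]
  simp only [_root_.sum_apply, smul_apply, ContinuousLinearMap.proj_apply, smul_eq_mul]
  rw [sum_eq_single j (fun l _ hl => by simp [Pi.single_eq_of_ne hl]) (by simp),
    ← mul_prod_erase univ (fun l => x l ^ y l) (mem_univ j)]
  rcases Nat.eq_zero_or_pos (y j) with h | h
  · simp [h]
  · rw [Pi.single_eq_same, ← pow_sub_one_mul h.ne']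
    field_simp

theorem fderiv_sum_mul_monomial_apply_single {ι κ : Type*} [Fintype ι] [DecidableEq ι] [Fintype κ]
    (k Δ : κ → ℝ) (y : κ → ι → ℕ) {x : ι → ℝ} {j : ι} (hx : x j ≠ 0) :
    fderiv ℝ (fun x : ι → ℝ => ∑ i, k i * (∏ l, x l ^ y i l) * Δ i) x (Pi.single j 1) =
      ∑ i, k i * (y i j / x j * ∏ l, x l ^ y i l) * Δ i := by
  have hM : ∀ i, HasFDerivAt (fun x : ι → ℝ => ∏ l, x l ^ y i l)
      (fderiv ℝ (fun x : ι → ℝ => ∏ l, x l ^ y i l) x) x := fun i =>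
    (hasFDerivAt_monomial (y i) x).differentiableAt.hasFDerivAt
  rw [(HasFDerivAt.fun_sum fun i _ => ((hM i).const_mul (k i)).mul_const (Δ i)).fderiv]
  simp only [_root_.sum_apply, smul_apply, fderiv_monomial_apply_single _ hx, smul_eq_mul]
  exact sum_congr rfl fun i _ => mul_comm _ _

theorem stmt_14 (n q : ℕ) (i₀ : Fin (q + 1))
    (k : Fin (q + 1) → ℝ) (hk : ∀ i, 0 < k i)
    (xs : Fin n → ℝ) (hxs : ∀ j, 0 < xs j) (hn : 0 < n)
    (y : Fin (q + 1) → Fin n → ℕ)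
    -- complex-balanced condition along the cycle
    (hcb : ∀ i j : Fin (q + 1),
      k i * ∏ l, xs l ^ y i l = k j * ∏ l, xs l ^ y j l)
    (f : (Fin n → ℝ) → ℝ)
    (hf : ∀ x, f x = ∑ i : Fin (q + 1),
      k i * (∏ l, x l ^ y i l) * ((y (i + 1) ⟨0, hn⟩ : ℝ) - (y i ⟨0, hn⟩ : ℝ))) :
    f xs = 0 ∧
    fderiv ℝ f xs (Pi.single ⟨0, hn⟩ 1)
      = (k i₀ * ∏ l, xs l ^ y i₀ l) / xs ⟨0, hn⟩ *
        ∑ i : Fin (q + 1),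
          ((y (i + 1) ⟨0, hn⟩ : ℝ) - (y i ⟨0, hn⟩ : ℝ)) * (y i ⟨0, hn⟩ : ℝ) ∧
    fderiv ℝ f xs (Pi.single ⟨0, hn⟩ 1) ≤ 0 ∧
    (fderiv ℝ f xs (Pi.single ⟨0, hn⟩ 1) = 0 ↔
      ∀ i j : Fin (q + 1), y i ⟨0, hn⟩ = y j ⟨0, hn⟩) := by
  set z : Fin n := ⟨0, hn⟩
  set c := k i₀ * ∏ l, xs l ^ y i₀ l
  have hcx : 0 < c / xs z :=
    div_pos (mul_pos (hk i₀) (prod_pos fun l _ => pow_pos (hxs l) _)) (hxs z)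
  have hP : ∀ i, k i * ∏ l, xs l ^ y i l = c := fun i => hcb i i₀
  set σ := Equiv.addRight (1 : Fin (q + 1))
  set a : Fin (q + 1) → ℝ := fun i => y i z
  have hval : fderiv ℝ f xs (Pi.single z 1) = c / xs z * ∑ i, (a (σ i) - a i) * a i := by
    rw [funext hf, fderiv_sum_mul_monomial_apply_single _ _ _ (hxs z).ne', mul_sum]
    refine sum_congr rfl fun i _ => ?_
    rw [← hP i]
    simp only [σ, a, Equiv.coe_addRight]
    ring
  refine ⟨?_, hval, ?_, ?_⟩
  · simp_rw [hf, hP, ← mul_sum]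
    exact mul_eq_zero_of_right c (sum_perm_sub_eq_zero σ a)
  · exact hval ▸ mul_nonpos_of_nonneg_of_nonpos hcx.le (sum_perm_sub_mul_self_nonpos σ a)
  · rw [hval, mul_eq_zero_iff_left hcx.ne', sum_perm_sub_mul_self_eq_zero_iff]
    constructor
    · intro h i j
      exact Nat.cast_injective (Fin.eq_of_forall_add_one_eq h i j)
    · intro h i
      exact congrArg Nat.cast (h (i + 1) i)
end
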